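/- arXiv:1812.03739 — 2 statements merged into one kernel-verified Lean document; each statement's English description precedes it below -/
import Mathlib

section
/- Let b = Ax + z with ‖z‖₂ ≤ ε, let λ > 0, and let x^♯ be a minimizer of u ↦ ‖u‖₁ + (1/(2λ))‖b − Au‖₂². Set h = x^♯ − x. Then for every subset E ⊂ {1,…,n}, ‖h_{E^c}‖₁ ≤ ‖h_E‖₁ + 2‖x_{E^c}‖₁ + (ε/λ)‖Ah‖₂. -/
noncomputable def l2norm {ι : Type*} [Fintype ι] (v : ι → ℝ) : ℝ :=
  Real.sqrt (∑ i, (v i) ^ 2)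

noncomputable def l1norm {ι : Type*} [Fintype ι] (v : ι → ℝ) : ℝ :=
  ∑ i, |v i|

noncomputable def linfnorm {ι : Type*} [Fintype ι] (v : ι → ℝ) : ℝ :=
  ⨆ i, |v i|

/-- The mutual coherence of a matrix: the largest absolute inner product
between two distinct columns. -/
noncomputable def mutualCoherence {m n : ℕ} (A : Matrix (Fin m) (Fin n) ℝ) : ℝ :=
  ⨆ p : {p : Fin n × Fin n // p.1 ≠ p.2}, |∑ r, A r p.1.1 * A r p.1.2|

/-- `restrict v E` agrees with `v` on `E` and vanishes outside of `E`. -/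
def restrict {n : ℕ} (v : Fin n → ℝ) (E : Finset (Fin n)) : Fin n → ℝ :=
  fun i => if i ∈ E then v i else 0

/-- A vector is `k`-sparse if it has at most `k` nonzero entries. -/
def sparse {n : ℕ} (k : ℕ) (v : Fin n → ℝ) : Prop :=
  (Finset.univ.filter fun i => v i ≠ 0).card ≤ k

lemma l1norm_restrict {n : ℕ} (v : Fin n → ℝ) (E : Finset (Fin n)) :
    l1norm (restrict v E) = ∑ i ∈ E, |v i| := by
  unfold l1norm restrict
  rw [← Finset.sum_subset (Finset.subset_univ E)]
  · exact Finset.sum_congr rfl fun i hi => by simp [hi]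
  · intro i _ hi; simp [hi]

theorem stmt_2 {m n : ℕ} (A : Matrix (Fin m) (Fin n) ℝ)
    (x : Fin n → ℝ) (z : Fin m → ℝ) (b : Fin m → ℝ) (hb : b = A.mulVec x + z)
    (ε lam : ℝ) (hz : l2norm z ≤ ε) (hlam : 0 < lam)
    (xs : Fin n → ℝ)
    (hmin : ∀ u : Fin n → ℝ,
      l1norm xs + 1 / (2 * lam) * l2norm (b - A.mulVec xs) ^ 2 ≤
        l1norm u + 1 / (2 * lam) * l2norm (b - A.mulVec u) ^ 2)
    (E : Finset (Fin n)) :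
    l1norm (restrict (xs - x) Eᶜ) ≤
      l1norm (restrict (xs - x) E) + 2 * l1norm (restrict x Eᶜ)
        + ε / lam * l2norm (A.mulVec (xs - x)) := by
  set h : Fin n → ℝ := xs - x with hh
  set w : Fin m → ℝ := A.mulVec h with hw
  have hbxs : b - A.mulVec xs = z - w := by
    rw [hb, hw, hh, Matrix.mulVec_sub]; abel
  have hbx : b - A.mulVec x = z := by rw [hb]; abel
  have sq2 : ∀ v : Fin m → ℝ, l2norm v ^ 2 = ∑ i, v i ^ 2 := fun v =>
    Real.sq_sqrt (Finset.sum_nonneg fun i _ => sq_nonneg _)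
  have hzn : 0 ≤ l2norm z := Real.sqrt_nonneg _
  have hwn : 0 ≤ l2norm w := Real.sqrt_nonneg _
  have hεn : 0 ≤ ε := le_trans hzn hz
  -- Cauchy-Schwarz
  have hcs : ∑ i, z i * w i ≤ l2norm z * l2norm w := Real.sum_mul_le_sqrt_mul_sqrt _ _ _
  -- key inequality : l1norm xs ≤ l1norm x + ε / lam * l2norm w
  have hkey : l1norm xs ≤ l1norm x + ε / lam * l2norm w := by
    have h1 := hmin x
    rw [hbxs, hbx, sq2, sq2] at h1
    simp only [Pi.sub_apply] at h1
    have hexp : ∑ i, (z i - w i) ^ 2 = ∑ i, z i ^ 2 - 2 * ∑ i, z i * w i + ∑ i, w i ^ 2 := by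
      rw [Finset.mul_sum, ← Finset.sum_sub_distrib, ← Finset.sum_add_distrib]
      exact Finset.sum_congr rfl fun i _ => by ring
    rw [hexp] at h1
    have hinv : 0 < 1 / (2 * lam) := by positivity
    have hw2 : 0 ≤ ∑ i, w i ^ 2 := Finset.sum_nonneg fun i _ => sq_nonneg _
    -- from h1: l1 xs ≤ l1 x + (1/(2λ))(2 ∑ z w - ∑ w²) ≤ l1 x + (1/λ) ∑ z w
    have h2 : l1norm xs ≤ l1norm x + 1 / lam * (∑ i, z i * w i) := by
      have : 1 / (2 * lam) * (2 * ∑ i, z i * w i - ∑ i, w i ^ 2)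
          ≤ 1 / lam * (∑ i, z i * w i) := by
        have h3 : 1 / (2 * lam) * (∑ i, w i ^ 2) ≥ 0 := by positivity
        have : 1 / (2 * lam) * (2 * ∑ i, z i * w i) = 1 / lam * (∑ i, z i * w i) := by
          field_simp
        nlinarith
      nlinarith
    have h4 : 1 / lam * (∑ i, z i * w i) ≤ ε / lam * l2norm w := by
      have : l2norm z * l2norm w ≤ ε * l2norm w := mul_le_mul_of_nonneg_right hz hwn
      have h5 : 1 / lam * (∑ i, z i * w i) ≤ 1 / lam * (ε * l2norm w) := by
        apply mul_le_mul_of_nonneg_left (le_trans hcs this) (by positivity)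
      calc 1 / lam * (∑ i, z i * w i) ≤ 1 / lam * (ε * l2norm w) := h5
        _ = ε / lam * l2norm w := by ring
    linarith
  -- now componentwise estimates
  rw [l1norm_restrict, l1norm_restrict, l1norm_restrict]
  have hsplit : ∀ v : Fin n → ℝ, l1norm v = ∑ i ∈ E, |v i| + ∑ i ∈ Eᶜ, |v i| := by
    intro v
    rw [l1norm, ← Finset.sum_add_sum_compl E fun i => |v i|]
  have hE : ∑ i ∈ E, |x i| ≤ ∑ i ∈ E, (|xs i| + |h i|) :=
    Finset.sum_le_sum fun i _ => by
      have : x i = xs i - h i := by simp [hh]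
      rw [this]; exact abs_sub _ _
  have hEc : ∑ i ∈ Eᶜ, |h i| ≤ ∑ i ∈ Eᶜ, (|xs i| + |x i|) :=
    Finset.sum_le_sum fun i _ => by
      have : h i = xs i - x i := by simp [hh]
      rw [this]; exact abs_sub _ _
  rw [Finset.sum_add_distrib] at hE hEc
  have e1 := hsplit xs
  have e2 := hsplit x
  simp only [hh, Pi.sub_apply] at *
  linarith
end

section
/- Let A ∈ ℝ^{m×n} have columns of unit ℓ2-norm and mutual coherence μ, and let k ≥ 2 be an integer with μ < 1/(k−1). Then for every vector h ∈ ℝⁿ and every subset E ⊂ {1,…,n} with |E| = k, ‖h_E‖₂ ≤ α₁‖Ah‖₂ + α₂‖h_{E^c}‖₁, where α₁ = √(1+(k−1)μ)/(1−(k−1)μ) and α₂ = √k·μ/(1−(k−1)μ). -/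
/-!
Put `x = h_E`, `y = h_{Eᶜ}` and `c = (k - 1) μ`. The Gram matrix `AᵀA` has unit diagonal and
off-diagonal entries bounded by `μ`. As `x` is supported on `k` coordinates, `‖x‖₁² ≤ k ‖x‖₂²`,
so the off-diagonal part of `⟨Ax, Ax⟩` is at most `μ (‖x‖₁² - ‖x‖₂²) ≤ c ‖x‖₂²`, whence
`(1 - c) ‖x‖₂² ≤ ‖Ax‖₂² ≤ (1 + c) ‖x‖₂²`. As `x` and `y` have disjoint supports, only
off-diagonal entries enter `⟨Ax, Ay⟩`, so `|⟨Ax, Ay⟩| ≤ μ ‖x‖₁ ‖y‖₁ ≤ √k μ ‖x‖₂ ‖y‖₁`.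
Writing `‖Ax‖₂² = ⟨Ax, Ah⟩ - ⟨Ax, Ay⟩` and applying Cauchy–Schwarz to `⟨Ax, Ah⟩` gives
`(1 - c) ‖x‖₂² ≤ ‖x‖₂ (√(1 + c) ‖Ah‖₂ + √k μ ‖y‖₁)`; divide by `‖x‖₂`.
-/

open Finset hiding restrict
open Matrix

section Norms

variable {ι : Type*} [Fintype ι]

lemma l2norm_nonneg (v : ι → ℝ) : 0 ≤ l2norm v := Real.sqrt_nonneg _

lemma l2norm_sq (v : ι → ℝ) : l2norm v ^ 2 = v ⬝ᵥ v := by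
  rw [l2norm, Real.sq_sqrt (by positivity)]
  simp only [dotProduct, sq]

lemma dotProduct_le_l2norm_mul_l2norm (u v : ι → ℝ) : u ⬝ᵥ v ≤ l2norm u * l2norm v :=
  Real.sum_mul_le_sqrt_mul_sqrt univ u v

lemma l1norm_nonneg (v : ι → ℝ) : 0 ≤ l1norm v := by
  unfold l1norm; positivity

lemma l1norm_le_sqrt_card_mul_l2norm {v : ι → ℝ} {E : Finset ι} (hv : ∀ i ∉ E, v i = 0) :
    l1norm v ≤ √(#E) * l2norm v := by
  have hsupp : l1norm v = ∑ i ∈ E, |v i| :=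
    (sum_subset (subset_univ E) fun i _ hi => by simp [hv i hi]).symm
  have hsq : l2norm v ^ 2 = ∑ i ∈ E, |v i| ^ 2 := by
    rw [l2norm, Real.sq_sqrt (by positivity)]
    exact (sum_subset (subset_univ E) fun i _ hi => by simp [hv i hi]).symm.trans
      (sum_congr rfl fun i _ => (sq_abs _).symm)
  rw [← Real.sqrt_sq (l1norm_nonneg v), ← Real.sqrt_sq (l2norm_nonneg v),
    ← Real.sqrt_mul (by positivity)]
  refine Real.sqrt_le_sqrt ?_
  rw [hsupp, hsq]
  exact sq_sum_le_card_mul_sum_sq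

lemma l1norm_sq_le_card_mul_l2norm_sq {v : ι → ℝ} {E : Finset ι} (hv : ∀ i ∉ E, v i = 0) :
    l1norm v ^ 2 ≤ #E * l2norm v ^ 2 := by
  calc l1norm v ^ 2 ≤ (√(#E) * l2norm v) ^ 2 :=
        pow_le_pow_left₀ (l1norm_nonneg v) (l1norm_le_sqrt_card_mul_l2norm hv) 2
    _ = #E * l2norm v ^ 2 := by rw [mul_pow, Real.sq_sqrt (by positivity)]

end Norms

section Gram

variable {ι κ : Type*} [Fintype ι] [Fintype κ]

lemma mulVec_dotProduct_mulVec (A : Matrix κ ι ℝ) (u v : ι → ℝ) :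
    A *ᵥ u ⬝ᵥ A *ᵥ v = u ⬝ᵥ (Aᵀ * A) *ᵥ v := by
  rw [← mulVec_mulVec, dotProduct_mulVec u Aᵀ, vecMul_transpose]

lemma abs_dotProduct_mulVec_sub_diag_le (G : Matrix ι ι ℝ) {μ : ℝ}
    (hG : ∀ i j, i ≠ j → |G i j| ≤ μ) (u v : ι → ℝ) :
    |u ⬝ᵥ G *ᵥ v - ∑ i, u i * G i i * v i|
      ≤ μ * (l1norm u * l1norm v - ∑ i, |u i| * |v i|) := by
  classical
  have hsplit : u ⬝ᵥ G *ᵥ v - ∑ i, u i * G i i * v i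
      = ∑ i, ∑ j ∈ univ.erase i, u i * G i j * v j := by
    simp only [dotProduct, mulVec, mul_sum, ← sum_sub_distrib, sum_erase_eq_sub (mem_univ _),
      mul_assoc]
  have hbound : ∑ i, ∑ j ∈ univ.erase i, |u i| * μ * |v j|
      = μ * (l1norm u * l1norm v - ∑ i, |u i| * |v i|) := by
    have hrow : ∀ i, ∑ j ∈ univ.erase i, |u i| * μ * |v j|
        = μ * (|u i| * l1norm v - |u i| * |v i|) := fun i => by
      rw [sum_erase_eq_sub (mem_univ i), ← mul_sum, l1norm]
      ring
    rw [sum_congr rfl fun i _ => hrow i, ← mul_sum, sum_sub_distrib, ← sum_mul]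
    rfl
  rw [hsplit, ← hbound]
  refine (abs_sum_le_sum_abs _ _).trans <| sum_le_sum fun i _ =>
    (abs_sum_le_sum_abs _ _).trans <| sum_le_sum fun j hj => ?_
  rw [abs_mul, abs_mul]
  gcongr
  exact hG i j (ne_of_mem_erase hj).symm

variable (A : Matrix κ ι ℝ) {μ : ℝ}

lemma abs_mulVec_dotProduct_mulVec_le (hoff : ∀ i j, i ≠ j → |(Aᵀ * A) i j| ≤ μ)
    {x y : ι → ℝ} (hxy : ∀ i, x i * y i = 0) :
    |A *ᵥ x ⬝ᵥ A *ᵥ y| ≤ μ * l1norm x * l1norm y := by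
  have hdiag : ∑ i, x i * (Aᵀ * A) i i * y i = 0 :=
    sum_eq_zero fun i _ => by rw [mul_right_comm, hxy, zero_mul]
  have hdiag_abs : ∑ i, |x i| * |y i| = 0 :=
    sum_eq_zero fun i _ => by rw [← abs_mul, hxy, abs_zero]
  have := abs_dotProduct_mulVec_sub_diag_le (Aᵀ * A) hoff x y
  rw [hdiag, hdiag_abs, sub_zero, sub_zero, ← mulVec_dotProduct_mulVec] at this
  linarith

lemma abs_l2norm_mulVec_sq_sub_l2norm_sq_le (hdiag : ∀ i, (Aᵀ * A) i i = 1)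
    (hoff : ∀ i j, i ≠ j → |(Aᵀ * A) i j| ≤ μ) (hμ : 0 ≤ μ)
    {x : ι → ℝ} {E : Finset ι} (hx : ∀ i ∉ E, x i = 0) :
    |l2norm (A *ᵥ x) ^ 2 - l2norm x ^ 2| ≤ (#E - 1) * μ * l2norm x ^ 2 := by
  have hdot : ∑ i, x i * x i = l2norm x ^ 2 := (l2norm_sq x).symm
  have hsq : ∑ i, |x i| * |x i| = l2norm x ^ 2 := by simp only [← abs_mul, abs_mul_self, hdot]
  have := abs_dotProduct_mulVec_sub_diag_le (Aᵀ * A) hoff x x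
  simp only [hdiag, mul_one, hsq, hdot, ← mulVec_dotProduct_mulVec, ← l2norm_sq] at this
  calc |l2norm (A *ᵥ x) ^ 2 - l2norm x ^ 2|
      ≤ μ * (l1norm x ^ 2 - l2norm x ^ 2) := by rwa [sq (l1norm x)]
    _ ≤ μ * (#E * l2norm x ^ 2 - l2norm x ^ 2) := by
      gcongr
      exact l1norm_sq_le_card_mul_l2norm_sq hx
    _ = (#E - 1) * μ * l2norm x ^ 2 := by ring

end Gram

lemma gram_apply_self {ι κ : Type*} [Fintype κ] (A : Matrix κ ι ℝ) (j : ι) :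
    (Aᵀ * A) j j = l2norm (fun i => A i j) ^ 2 := by
  rw [l2norm_sq]
  rfl

lemma mutualCoherence_nonneg {m n : ℕ} (A : Matrix (Fin m) (Fin n) ℝ) :
    0 ≤ mutualCoherence A :=
  Real.iSup_nonneg fun _ => abs_nonneg _

lemma abs_gram_le_mutualCoherence {m n : ℕ} (A : Matrix (Fin m) (Fin n) ℝ) {i j : Fin n}
    (hij : i ≠ j) : |(Aᵀ * A) i j| ≤ mutualCoherence A :=
  le_ciSup (f := fun p : {p : Fin n × Fin n // p.1 ≠ p.2} => |∑ r, A r p.1.1 * A r p.1.2|)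
    (Set.finite_range _).bddAbove ⟨(i, j), hij⟩

section Restrict

variable {n : ℕ} (v : Fin n → ℝ) (E : Finset (Fin n))

lemma restrict_of_notMem {i : Fin n} (hi : i ∉ E) : restrict v E i = 0 := if_neg hi

lemma restrict_add_restrict_compl : restrict v E + restrict v Eᶜ = v := by
  ext i
  by_cases hi : i ∈ E <;> simp [restrict, hi]

lemma restrict_mul_restrict_compl (i : Fin n) : restrict v E i * restrict v Eᶜ i = 0 := by
  by_cases hi : i ∈ E <;> simp [restrict, hi]

end Restrict

lemma mul_l2norm_restrict_le {κ : Type*} [Fintype κ] {n : ℕ} (A : Matrix κ (Fin n) ℝ) {μ : ℝ}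
    (hdiag : ∀ i, (Aᵀ * A) i i = 1) (hoff : ∀ i j, i ≠ j → |(Aᵀ * A) i j| ≤ μ) (hμ : 0 ≤ μ)
    (h : Fin n → ℝ) (E : Finset (Fin n)) :
    (1 - (#E - 1) * μ) * l2norm (restrict h E)
      ≤ √(1 + (#E - 1) * μ) * l2norm (A *ᵥ h) + √(#E) * μ * l1norm (restrict h Eᶜ) := by
  set x := restrict h E
  set y := restrict h Eᶜ
  have hx : ∀ i ∉ E, x i = 0 := fun _ => restrict_of_notMem h E
  have hrip := abs_le.mp (abs_l2norm_mulVec_sq_sub_l2norm_sq_le A hdiag hoff hμ hx)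
  set c := ((#E : ℝ) - 1) * μ
  set t := l2norm x
  have ht0 : 0 ≤ t := l2norm_nonneg x
  have hAx : l2norm (A *ᵥ x) ≤ √(1 + c) * t := by
    rw [← Real.sqrt_sq (l2norm_nonneg (A *ᵥ x)), ← Real.sqrt_sq ht0,
      ← Real.sqrt_mul' _ (sq_nonneg t)]
    exact Real.sqrt_le_sqrt (by linarith [hrip.2])
  have hsplit : l2norm (A *ᵥ x) ^ 2 = A *ᵥ x ⬝ᵥ A *ᵥ h - A *ᵥ x ⬝ᵥ A *ᵥ y := by
    rw [l2norm_sq, ← restrict_add_restrict_compl h E, mulVec_add, dotProduct_add]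
    ring
  have hcross : |A *ᵥ x ⬝ᵥ A *ᵥ y| ≤ μ * (√(#E) * t) * l1norm y :=
    (abs_mulVec_dotProduct_mulVec_le A hoff (restrict_mul_restrict_compl h E)).trans <| by
      gcongr
      · exact l1norm_nonneg y
      · exact l1norm_le_sqrt_card_mul_l2norm hx
  have hkey : (1 - c) * t * t ≤ (√(1 + c) * l2norm (A *ᵥ h) + √(#E) * μ * l1norm y) * t :=
    calc (1 - c) * t * t ≤ l2norm (A *ᵥ x) ^ 2 := by linarith [hrip.1]
      _ ≤ l2norm (A *ᵥ x) * l2norm (A *ᵥ h) + μ * (√(#E) * t) * l1norm y := by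
        rw [hsplit]
        linarith [dotProduct_le_l2norm_mul_l2norm (A *ᵥ x) (A *ᵥ h), neg_abs_le (A *ᵥ x ⬝ᵥ A *ᵥ y)]
      _ ≤ √(1 + c) * t * l2norm (A *ᵥ h) + μ * (√(#E) * t) * l1norm y := by
        gcongr
        exact l2norm_nonneg _
      _ = _ := by ring
  rcases ht0.eq_or_lt with ht | ht
  · rw [← ht, mul_zero]
    have := l2norm_nonneg (A *ᵥ h)
    have := l1norm_nonneg y
    positivity
  · exact le_of_mul_le_mul_right hkey ht

theorem stmt_3_general {m n : ℕ} (A : Matrix (Fin m) (Fin n) ℝ)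
    (hA : ∀ j, l2norm (fun i => A i j) = 1)
    (k : ℕ)
    (hμ : mutualCoherence A < 1 / ((k : ℝ) - 1))
    (h : Fin n → ℝ) (E : Finset (Fin n)) (hE : E.card = k) :
    l2norm (restrict h E) ≤
      Real.sqrt (1 + ((k : ℝ) - 1) * mutualCoherence A)
          / (1 - ((k : ℝ) - 1) * mutualCoherence A) * l2norm (A.mulVec h)
        + Real.sqrt k * mutualCoherence A
          / (1 - ((k : ℝ) - 1) * mutualCoherence A) * l1norm (restrict h Eᶜ) := by
  have hμ0 := mutualCoherence_nonneg A
  have hk : 0 < (k : ℝ) - 1 := one_div_pos.mp (hμ0.trans_lt hμ)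
  have hden : 0 < 1 - ((k : ℝ) - 1) * mutualCoherence A := by
    linarith [(lt_div_iff₀ hk).mp hμ]
  have hbound := mul_l2norm_restrict_le A (fun j => by rw [gram_apply_self, hA, one_pow])
    (fun i j hij => abs_gram_le_mutualCoherence A hij) hμ0 h E
  rw [hE] at hbound
  rw [div_mul_eq_mul_div, div_mul_eq_mul_div, ← add_div, le_div_iff₀ hden]
  linarith

theorem stmt_3 {m n : ℕ} (A : Matrix (Fin m) (Fin n) ℝ)
    (hA : ∀ j, l2norm (fun i => A i j) = 1)
    (k : ℕ) (hk : 2 ≤ k)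
    (hμ : mutualCoherence A < 1 / ((k : ℝ) - 1))
    (h : Fin n → ℝ) (E : Finset (Fin n)) (hE : E.card = k) :
    l2norm (restrict h E) ≤
      Real.sqrt (1 + ((k : ℝ) - 1) * mutualCoherence A)
          / (1 - ((k : ℝ) - 1) * mutualCoherence A) * l2norm (A.mulVec h)
        + Real.sqrt k * mutualCoherence A
          / (1 - ((k : ℝ) - 1) * mutualCoherence A) * l1norm (restrict h Eᶜ) :=
  stmt_3_general A hA k hμ h E hE
end
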